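/- arXiv:1302.6964 — 4 statements merged into one kernel-verified Lean document; each statement's English description precedes it below -/
import Mathlib

section
/- Fix s < t, ℓ < υ, and x, y ∈ [ℓ, υ]. With ς_j := σ̄ⱼ^{ℓ,υ}(x,y) + σ̄ⱼ^{−υ,−ℓ}(−x,−y) and φ_j := φ̄ⱼ^{ℓ,υ}(x,y) + φ̄ⱼ^{−υ,−ℓ}(−x,−y) as in the γ series, for every j ≥ 1 one has ς_j ≥ φ_j ≥ ς_{j+1}, so that the partial sums S_{2k} = 1 − Σ_{j=1}^{k}(ς_j − φ_j) and S_{2k+1} = S_{2k} − ς_{k+1} form an alternating sequence with S_{2k+1} ≤ γ ≤ S_{2k} converging to γ = 1 − Σ_{j≥1}(ς_j − φ_j). -/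
open Filter Finset Topology

/-!
Writing `d = υ - ℓ`, `a = x - ℓ`, `b = y - ℓ`, the exponents of `σ̄ⱼ` and `φ̄ⱼ` are `-2/(t-s)` times
`(dj - a)(dj - b)` and `dj(dj + a - b)`. For `a, b ∈ [0, d]` and `j ≥ 1` these quadratics are
interlaced, `(dj - a)(dj - b) ≤ dj(dj + a - b) ≤ (d(j+1) - a)(d(j+1) - b)`, which gives
`σ̄ⱼ ≥ φ̄ⱼ ≥ σ̄ⱼ₊₁`. The reflected terms `σ̄^{−υ,−ℓ}(−x,−y)` are the same functions at the mirrored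
points `ℓ + υ - x, ℓ + υ - y`, so `ςⱼ ≥ φⱼ ≥ ςⱼ₊₁` as well. Hence the terms `ςⱼ - φⱼ` of the series
are nonnegative and every tail is dominated by a telescoping sum bounded by its first `ς`.
-/

section Interlacing

variable {u v : ℕ → ℝ} {S : ℝ}

theorem HasSum.le_sum_range_add_of_succ_le (h : HasSum (fun j ↦ u j - v j) S)
    (huv : ∀ j, u (j + 1) ≤ v j) (hu : ∀ j, 0 ≤ u j) (k : ℕ) :
    S ≤ ∑ j ∈ range k, (u j - v j) + u k := by
  have htail : HasSum (fun n ↦ u (n + k) - v (n + k)) (S - ∑ j ∈ range k, (u j - v j)) :=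
    (hasSum_nat_add_iff' k).2 h
  have hpartial : ∀ n, ∑ i ∈ range n, (u (i + k) - v (i + k)) ≤ u k := fun n ↦
    calc ∑ i ∈ range n, (u (i + k) - v (i + k))
        ≤ ∑ i ∈ range n, (u (i + k) - u (i + 1 + k)) := sum_le_sum fun i _ ↦ by
          rw [Nat.add_right_comm]; linarith [huv (i + k)]
      _ = u k - u (n + k) := by simpa using sum_range_sub' (fun i ↦ u (i + k)) n
      _ ≤ u k := sub_le_self _ (hu _)
  linarith [le_of_tendsto' htail.tendsto_sum_nat hpartial]

end Interlacing

-- `sigmaBar T l u a b j` is `σ̄ⱼ^{l,u}(a,b)` with `T = t - s`; likewise `phiBar`.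
noncomputable def sigmaBar (T l u a b : ℝ) (j : ℕ) : ℝ :=
  Real.exp (-2 * (|u - l| * j + min l u - a) * (|u - l| * j + min l u - b) / T)

noncomputable def phiBar (T l u a b : ℝ) (j : ℕ) : ℝ :=
  Real.exp (-2 * j * (|u - l| ^ 2 * j + |u - l| * (a - b)) / T)

section BridgeTerms

variable {T l u a b : ℝ} {j : ℕ}

theorem sigmaBar_pos : 0 < sigmaBar T l u a b j := Real.exp_pos _

theorem sigmaBar_neg :
    sigmaBar T (-u) (-l) (-a) (-b) j = sigmaBar T l u (l + u - a) (l + u - b) j := by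
  have hmin : min (-u) (-l) = min l u - (l + u) := by
    rw [min_neg_neg, ← min_add_max l u, max_comm]; ring
  rw [sigmaBar, sigmaBar, hmin, show -l - -u = u - l by ring]
  ring_nf

theorem phiBar_neg :
    phiBar T (-u) (-l) (-a) (-b) j = phiBar T l u (l + u - a) (l + u - b) j := by
  rw [phiBar, phiBar, show -l - -u = u - l by ring]
  ring_nf

theorem sigmaBar_of_le (h : l ≤ u) :
    sigmaBar T l u a b j =
      Real.exp (-2 * (((u - l) * j - (a - l)) * ((u - l) * j - (b - l))) / T) := by
  rw [sigmaBar, abs_of_nonneg (sub_nonneg.2 h), min_eq_left h]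
  ring_nf

theorem phiBar_of_le (h : l ≤ u) :
    phiBar T l u a b j = Real.exp (-2 * ((u - l) * j * ((u - l) * j + (a - b))) / T) := by
  rw [phiBar, abs_of_nonneg (sub_nonneg.2 h)]
  ring_nf

theorem exp_neg_two_mul_div_le {p q : ℝ} (hT : 0 ≤ T) (hpq : p ≤ q) :
    Real.exp (-2 * q / T) ≤ Real.exp (-2 * p / T) :=
  Real.exp_le_exp.2 (div_le_div_of_nonneg_right (by linarith) hT)

theorem phiBar_le_sigmaBar (hT : 0 ≤ T) (ha : a ∈ Set.Icc l u) (hbu : b ≤ u) (hj : 1 ≤ j) :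
    phiBar T l u a b j ≤ sigmaBar T l u a b j := by
  have hlu : l ≤ u := ha.1.trans ha.2
  have hj' : (1 : ℝ) ≤ j := by exact_mod_cast hj
  rw [sigmaBar_of_le hlu, phiBar_of_le hlu]
  refine exp_neg_two_mul_div_le hT ?_
  have hgap : 0 ≤ 2 * (u - l) * j - (b - l) := by nlinarith
  -- the difference of the two exponents is `(a - l) * (2 * (u - l) * j - (b - l))`
  nlinarith [mul_nonneg (sub_nonneg.2 ha.1) hgap]

theorem sigmaBar_succ_le_phiBar (hT : 0 ≤ T) (hlu : l ≤ u) (hau : a ≤ u) (hbu : b ≤ u) :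
    sigmaBar T l u a b (j + 1) ≤ phiBar T l u a b j := by
  rw [sigmaBar_of_le hlu, phiBar_of_le hlu]
  refine exp_neg_two_mul_div_le hT ?_
  push_cast
  -- the difference is `2 (u - l) j (u - a) + (u - a) (u - b) ≥ 0`
  nlinarith [mul_nonneg (mul_nonneg (sub_nonneg.2 hlu) (Nat.cast_nonneg (α := ℝ) j))
    (sub_nonneg.2 hau), mul_nonneg (sub_nonneg.2 hau) (sub_nonneg.2 hbu)]

theorem tendsto_sigmaBar_atTop (hT : 0 < T) (hlu : l < u) :
    Tendsto (sigmaBar T l u a b) atTop (𝓝 0) := by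
  have hlin : ∀ c : ℝ, Tendsto (fun j : ℕ ↦ (u - l) * j - c) atTop atTop := fun c ↦
    tendsto_atTop_add_const_right _ (-c)
      (tendsto_natCast_atTop_atTop.const_mul_atTop (sub_pos.2 hlu))
  have hexponent := (((hlin (a - l)).atTop_mul_atTop₀ (hlin (b - l))).const_mul_atTop_of_neg
    (by norm_num : (-2 : ℝ) < 0)).atBot_div_const hT
  exact (Real.tendsto_exp_atBot.comp hexponent).congr fun j ↦ (sigmaBar_of_le hlu.le).symm

end BridgeTerms

/-- Alternating Cauchy sequence property of the `γ` series: with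
`ςⱼ := σ̄ⱼ^{ℓ,υ}(x,y) + σ̄ⱼ^{−υ,−ℓ}(−x,−y)` and `φⱼ := φ̄ⱼ^{ℓ,υ}(x,y) + φ̄ⱼ^{−υ,−ℓ}(−x,−y)`,
for every `j ≥ 1` one has `ςⱼ ≥ φⱼ ≥ ς_{j+1}`, so the partial sums
`S_{2k} = 1 − Σ_{j=1}^k (ςⱼ − φⱼ)` and `S_{2k+1} = S_{2k} − ς_{k+1}` bracket
`γ = 1 − Σ_{j≥1}(ςⱼ − φⱼ)` and both converge to it. -/
theorem stmt4 (s t ℓ υ x y : ℝ) (hst : s < t) (hlu : ℓ < υ)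
    (hx : x ∈ Set.Icc ℓ υ) (hy : y ∈ Set.Icc ℓ υ)
    (sbar pbar : ℝ → ℝ → ℝ → ℝ → ℕ → ℝ)
    (hsbar : ∀ l u a b (j : ℕ), sbar l u a b j =
      Real.exp (-2 * (|u - l| * j + min l u - a) * (|u - l| * j + min l u - b) / (t - s)))
    (hpbar : ∀ l u a b (j : ℕ), pbar l u a b j =
      Real.exp (-2 * j * (|u - l| ^ 2 * j + |u - l| * (a - b)) / (t - s)))
    (ς φ : ℕ → ℝ)
    (hς : ∀ j, ς j = sbar ℓ υ x y j + sbar (-υ) (-ℓ) (-x) (-y) j)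
    (hφ : ∀ j, φ j = pbar ℓ υ x y j + pbar (-υ) (-ℓ) (-x) (-y) j)
    (γ : ℝ) (hγ : HasSum (fun j : ℕ => ς (j + 1) - φ (j + 1)) (1 - γ)) :
    (∀ j : ℕ, 1 ≤ j → φ j ≤ ς j ∧ ς (j + 1) ≤ φ j) ∧
    (∀ k : ℕ,
      (1 - ∑ j ∈ Finset.range k, (ς (j + 1) - φ (j + 1))) - ς (k + 1) ≤ γ ∧
      γ ≤ 1 - ∑ j ∈ Finset.range k, (ς (j + 1) - φ (j + 1))) ∧
    Tendsto (fun k => 1 - ∑ j ∈ Finset.range k, (ς (j + 1) - φ (j + 1)))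
      atTop (nhds γ) ∧
    Tendsto (fun k => (1 - ∑ j ∈ Finset.range k, (ς (j + 1) - φ (j + 1))) - ς (k + 1))
      atTop (nhds γ) := by
  have hT : 0 < t - s := sub_pos.2 hst
  obtain rfl : sbar = sigmaBar (t - s) := by funext l u a b j; exact hsbar l u a b j
  obtain rfl : pbar = phiBar (t - s) := by funext l u a b j; exact hpbar l u a b j
  simp only [sigmaBar_neg, phiBar_neg] at hς hφ
  have hx' : ℓ + υ - x ∈ Set.Icc ℓ υ := ⟨by linarith [hx.2], by linarith [hx.1]⟩
  have hy' : ℓ + υ - y ∈ Set.Icc ℓ υ := ⟨by linarith [hy.2], by linarith [hy.1]⟩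
  have hinterlace : ∀ j : ℕ, 1 ≤ j → φ j ≤ ς j ∧ ς (j + 1) ≤ φ j := fun j hj ↦ by
    rw [hς, hς, hφ]
    exact ⟨add_le_add (phiBar_le_sigmaBar hT.le hx hy.2 hj)
        (phiBar_le_sigmaBar hT.le hx' hy'.2 hj),
      add_le_add (sigmaBar_succ_le_phiBar hT.le hlu.le hx.2 hy.2)
        (sigmaBar_succ_le_phiBar hT.le hlu.le hx'.2 hy'.2)⟩
  have hς_nonneg : ∀ j, 0 ≤ ς j := fun j ↦ by
    rw [hς]; exact add_nonneg sigmaBar_pos.le sigmaBar_pos.le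
  have hς_lim : Tendsto ς atTop (𝓝 0) := by
    rw [funext hς, ← add_zero (0 : ℝ)]
    exact (tendsto_sigmaBar_atTop hT hlu).add (tendsto_sigmaBar_atTop hT hlu)
  have hupper := hγ.le_sum_range_add_of_succ_le (u := fun j ↦ ς (j + 1)) (v := fun j ↦ φ (j + 1))
    (fun j ↦ (hinterlace (j + 1) j.succ_pos).2) (fun j ↦ hς_nonneg (j + 1))
  have hlower k := sum_le_hasSum (range k)
    (fun j _ ↦ sub_nonneg.2 (hinterlace (j + 1) j.succ_pos).1) hγ
  have hlim : Tendsto (fun k ↦ 1 - ∑ j ∈ range k, (ς (j + 1) - φ (j + 1))) atTop (𝓝 γ) := by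
    simpa using (tendsto_const_nhds (x := (1 : ℝ))).sub hγ.tendsto_sum_nat
  refine ⟨hinterlace, fun k ↦ ⟨by linarith [hupper k], by linarith [hlower k]⟩, hlim, ?_⟩
  simpa using hlim.sub (hς_lim.comp (tendsto_add_atTop_nat 1))
end

section
/- Fix s < t, a minimum value m̂, an upper bound υ > m̂, and y ∈ (m̂, υ]. For j ≥ 1 define ψⱼ(y) = (2|υ−m̂|j − (y−m̂))·exp(−2|υ−m̂|j(|υ−m̂|j − (y−m̂))/(t−s)) and χⱼ(y) = (2|υ−m̂|j + (y−m̂))·exp(−2|υ−m̂|j(|υ−m̂|j + (y−m̂))/(t−s)). Then for all j ≥ 1, ψⱼ(y) ≥ 0 and χⱼ(y) ≥ 0, and for all j ≥ k̂ := √((t−s) + |υ−m̂|²)/(2|υ−m̂|), one has ψⱼ(y) ≥ χⱼ(y) ≥ ψ_{j+1}(y); consequently the partial sums S_{2k} = 1 − (y−m̂)^{-1} Σ_{j=1}^{k}(ψⱼ − χⱼ) and S_{2k+1} = S_{2k} − (y−m̂)^{-1}ψ_{k+1}, for k ≥ k̂, form an alternating decreasing-gap sequence bracketing the Bessel-bridge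 containment probability δ. -/
/-!
Write `a = |υ − m̂|`, `b = y − m̂ ∈ (0, a]`, `T = t − s` and `c = 2aj`. The exponents of
`ψⱼ` and `χⱼ` differ by `2cb/T`, so `χⱼ ≤ ψⱼ` reads `c + b ≤ (c − b) e^{2cb/T}`; this
follows from `eˣ ≥ 1 + x + x²/2` at `x = 2cb/(c² − b²) ≤ 2cb/T`, which is where
`j ≥ k̂` enters, through `T ≤ c² − a² ≤ c² − b²`. Likewise `ψⱼ₊₁ ≤ χⱼ` reads
`c + 2a − b ≤ (c + b) e^{2(c+a)(a−b)/T}`, which already follows from `eˣ ≥ 1 + x`.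
Past `k̂` the series `ψ₁ − χ₁ + ψ₂ − χ₂ + ⋯` is therefore alternating with decreasing
terms, so its tail after `k` pairs lies in `[0, ψₖ₊₁]`.
-/

open Real Finset

lemma add_le_sub_mul_exp {T b c : ℝ} (hT : 0 < T) (hb : 0 ≤ b) (hc : 0 ≤ c)
    (h : T ≤ c ^ 2 - b ^ 2) : c + b ≤ (c - b) * exp (2 * c * b / T) := by
  have hD : 0 < c ^ 2 - b ^ 2 := hT.trans_le h
  have hbc : b < c := by nlinarith
  set u := 2 * c * b / (c ^ 2 - b ^ 2) with hu
  have hu_le : u ≤ 2 * c * b / T := div_le_div_of_nonneg_left (by positivity) hT h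
  have hexp : 1 + u + u ^ 2 / 2 ≤ exp (2 * c * b / T) :=
    (quadratic_le_exp_of_nonneg (by positivity)).trans (exp_le_exp.2 hu_le)
  have hgap :
      (c - b) * (1 + u + u ^ 2 / 2) - (c + b) = 2 * b ^ 4 / ((c + b) * (c ^ 2 - b ^ 2)) := by
    have : c + b ≠ 0 := by linarith
    rw [hu]; field_simp; ring
  have hgap_nonneg : 0 ≤ 2 * b ^ 4 / ((c + b) * (c ^ 2 - b ^ 2)) := by
    have : 0 ≤ c + b := by linarith
    positivity
  nlinarith [mul_le_mul_of_nonneg_left hexp (sub_pos.2 hbc).le]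

lemma add_sub_le_add_mul_exp {T a b c : ℝ} (hT : 0 < T) (hba : b ≤ a) (hcb : 0 ≤ c + b)
    (h : T ≤ (c + b) * (c + a)) :
    c + 2 * a - b ≤ (c + b) * exp (2 * (c + a) * (a - b) / T) := by
  have hlin : 2 * (a - b) ≤ (c + b) * (2 * (c + a) * (a - b) / T) := by
    rw [mul_div_assoc', le_div_iff₀ hT]
    nlinarith [mul_nonneg (sub_nonneg.2 hba) (sub_nonneg.2 h)]
  nlinarith [mul_le_mul_of_nonneg_left (add_one_le_exp (2 * (c + a) * (a - b) / T)) hcb]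

lemma tsum_sub_mem_Icc_of_alternating {f g : ℕ → ℝ} (hs : Summable fun j ↦ f j - g j)
    (hgf : ∀ j, g j ≤ f j) (hfg : ∀ j, f (j + 1) ≤ g j) (hf : ∀ j, 0 ≤ f j) :
    ∑' j, (f j - g j) ∈ Set.Icc 0 (f 0) := by
  refine ⟨tsum_nonneg fun j ↦ sub_nonneg.2 (hgf j), hs.tsum_le_of_sum_range_le fun n ↦ ?_⟩
  calc ∑ j ∈ range n, (f j - g j)
      ≤ ∑ j ∈ range n, (f j - f (j + 1)) := sum_le_sum fun j _ ↦ by linarith [hfg j]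
    _ = f 0 - f n := sum_range_sub' f n
    _ ≤ f 0 := by linarith [hf n]

lemma sum_range_le_hasSum_le_add_of_alternating {f g : ℕ → ℝ} {L : ℝ} {k : ℕ}
    (hL : HasSum (fun j ↦ f (j + 1) - g (j + 1)) L)
    (hgf : ∀ j, k < j → g j ≤ f j) (hfg : ∀ j, k < j → f (j + 1) ≤ g j)
    (hf : ∀ j, k < j → 0 ≤ f j) :
    ∑ j ∈ range k, (f (j + 1) - g (j + 1)) ≤ L ∧
      L ≤ ∑ j ∈ range k, (f (j + 1) - g (j + 1)) + f (k + 1) := by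
  have hsplit := hL.summable.sum_add_tsum_nat_add k
  rw [hL.tsum_eq] at hsplit
  have htail := tsum_sub_mem_Icc_of_alternating (f := fun i ↦ f (i + k + 1))
    (g := fun i ↦ g (i + k + 1)) ((summable_nat_add_iff k).2 hL.summable)
    (fun i ↦ hgf (i + k + 1) (by omega)) (fun i ↦ by
      rw [show i + 1 + k + 1 = i + k + 1 + 1 by omega]; exact hfg _ (by omega))
    (fun i ↦ hf (i + k + 1) (by omega))
  simp only [zero_add] at htail
  constructor <;> linarith [htail.1, htail.2]

namespace BesselBridge

noncomputable def psi (a b T : ℝ) (j : ℕ) : ℝ :=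
  (2 * a * j - b) * exp (-2 * a * j * (a * j - b) / T)

noncomputable def chi (a b T : ℝ) (j : ℕ) : ℝ :=
  (2 * a * j + b) * exp (-2 * a * j * (a * j + b) / T)

noncomputable def kHat (a T : ℝ) : ℝ := √(T + a ^ 2) / (2 * a)

variable {a b T : ℝ}

lemma psi_nonneg (ha : 0 ≤ a) (hba : b ≤ a) {j : ℕ} (hj : 1 ≤ j) : 0 ≤ psi a b T j := by
  have : (1 : ℝ) ≤ j := by exact_mod_cast hj
  exact mul_nonneg (by nlinarith) (exp_pos _).le

lemma chi_nonneg (ha : 0 ≤ a) (hb : 0 ≤ b) (j : ℕ) : 0 ≤ chi a b T j :=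
  mul_nonneg (by positivity) (exp_pos _).le

lemma sq_le_of_kHat_le (ha : 0 < a) {x : ℝ} (hx : kHat a T ≤ x) :
    T + a ^ 2 ≤ (2 * a * x) ^ 2 := by
  rw [kHat, div_le_iff₀ (by positivity), mul_comm] at hx
  exact (sqrt_le_iff.1 hx).2

lemma chi_le_psi (hT : 0 < T) (ha : 0 ≤ a) (hb : 0 ≤ b) (hba : b ≤ a) {j : ℕ}
    (hj : T + a ^ 2 ≤ (2 * a * j) ^ 2) : chi a b T j ≤ psi a b T j := by
  have key := add_le_sub_mul_exp hT hb (by positivity : 0 ≤ 2 * a * j) (by nlinarith)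
  have hexp : -2 * a * j * (a * j - b) / T =
      2 * (2 * a * j) * b / T + -2 * a * j * (a * j + b) / T := by
    ring
  rw [psi, chi, hexp, exp_add, ← mul_assoc]
  exact mul_le_mul_of_nonneg_right key (exp_pos _).le

lemma psi_succ_le_chi (hT : 0 < T) (ha : 0 ≤ a) (hb : 0 ≤ b) (hba : b ≤ a) {j : ℕ}
    (hj : T + a ^ 2 ≤ (2 * a * j) ^ 2) : psi a b T (j + 1) ≤ chi a b T j := by
  have hc : 0 ≤ 2 * a * j := by positivity
  have key := add_sub_le_add_mul_exp (c := 2 * a * j) hT hba (by linarith) (by nlinarith)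
  set X := 2 * (2 * a * j + a) * (a - b) / T
  have hexp : -2 * a * ((j + 1 : ℕ) : ℝ) * (a * ((j + 1 : ℕ) : ℝ) - b) / T =
      -X + -2 * a * j * (a * j + b) / T := by
    push_cast; ring
  have hcoef : 2 * a * ((j + 1 : ℕ) : ℝ) - b = 2 * a * j + 2 * a - b := by push_cast; ring
  rw [psi, chi, hexp, hcoef, exp_add, ← mul_assoc]
  refine mul_le_mul_of_nonneg_right ?_ (exp_pos _).le
  calc (2 * a * j + 2 * a - b) * exp (-X)
      ≤ (2 * a * j + b) * exp X * exp (-X) := mul_le_mul_of_nonneg_right key (exp_pos _).le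
    _ = 2 * a * j + b := by rw [mul_assoc, ← exp_add, add_neg_cancel, exp_zero, mul_one]

end BesselBridge

open BesselBridge in
theorem stmt5_general (s t mhat υ y : ℝ) (hst : s < t) (hy : y ∈ Set.Ioc mhat υ)
    (ψ χ : ℕ → ℝ)
    (hψ : ∀ j : ℕ, ψ j = (2 * |υ - mhat| * j - (y - mhat)) *
      Real.exp (-2 * |υ - mhat| * j * (|υ - mhat| * j - (y - mhat)) / (t - s)))
    (hχ : ∀ j : ℕ, χ j = (2 * |υ - mhat| * j + (y - mhat)) *
      Real.exp (-2 * |υ - mhat| * j * (|υ - mhat| * j + (y - mhat)) / (t - s)))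
    (δ : ℝ) (hδ : HasSum (fun j : ℕ => (ψ (j + 1) - χ (j + 1)) / (y - mhat)) (1 - δ)) :
    (∀ j : ℕ, 1 ≤ j → 0 ≤ ψ j ∧ 0 ≤ χ j) ∧
    (∀ j : ℕ, Real.sqrt ((t - s) + |υ - mhat| ^ 2) / (2 * |υ - mhat|) ≤ (j : ℝ) →
      χ j ≤ ψ j ∧ ψ (j + 1) ≤ χ j) ∧
    (∀ k : ℕ, Real.sqrt ((t - s) + |υ - mhat| ^ 2) / (2 * |υ - mhat|) ≤ (k : ℝ) →
      (1 - (∑ j ∈ Finset.range k, (ψ (j + 1) - χ (j + 1))) / (y - mhat)) - ψ (k + 1) / (y - mhat) ≤ δ ∧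
      δ ≤ 1 - (∑ j ∈ Finset.range k, (ψ (j + 1) - χ (j + 1))) / (y - mhat)) := by
  obtain rfl : ψ = psi |υ - mhat| (y - mhat) (t - s) := funext hψ
  obtain rfl : χ = chi |υ - mhat| (y - mhat) (t - s) := funext hχ
  set a := |υ - mhat|
  set b := y - mhat
  set T := t - s
  have hT : 0 < T := sub_pos.2 hst
  have hb : 0 < b := sub_pos.2 hy.1
  have hba : b ≤ a := (sub_le_sub_right hy.2 _).trans (le_abs_self _)
  have ha : 0 < a := hb.trans_le hba
  have bracket : ∀ j : ℕ, kHat a T ≤ j →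
      chi a b T j ≤ psi a b T j ∧ psi a b T (j + 1) ≤ chi a b T j := fun j hj ↦
    ⟨chi_le_psi hT ha.le hb.le hba (sq_le_of_kHat_le ha hj),
      psi_succ_le_chi hT ha.le hb.le hba (sq_le_of_kHat_le ha hj)⟩
  refine ⟨fun j hj ↦ ⟨psi_nonneg ha.le hba hj, chi_nonneg ha.le hb.le j⟩, bracket, fun k hk ↦ ?_⟩
  have hS : HasSum (fun j ↦ psi a b T (j + 1) - chi a b T (j + 1)) (b * (1 - δ)) := by
    simpa only [mul_div_cancel₀ _ hb.ne'] using hδ.mul_left b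
  have hk' : ∀ j : ℕ, k < j → kHat a T ≤ j := fun j hj ↦ hk.trans (Nat.cast_le.2 hj.le)
  obtain ⟨hlow, hup⟩ := sum_range_le_hasSum_le_add_of_alternating hS
    (fun j hj ↦ (bracket j (hk' j hj)).1) (fun j hj ↦ (bracket j (hk' j hj)).2)
    (fun j hj ↦ psi_nonneg ha.le hba (by omega))
  rw [← div_le_iff₀' hb] at hlow
  rw [← le_div_iff₀' hb, add_div] at hup
  constructor <;> linarith

/-- Bessel bridge series: with `ψⱼ` and `χⱼ` as in the series for the probability `δ` that a
Bessel bridge from `(s,m̂)` to `(t,y)` with minimum `m̂` stays in `[m̂,υ]`, all terms with `j ≥ 1`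
are nonnegative, and for `j ≥ k̂ := √((t−s)+|υ−m̂|²)/(2|υ−m̂|)` one has `ψⱼ ≥ χⱼ ≥ ψ_{j+1}`;
consequently for `k ≥ k̂` the partial sums `S_{2k}` and `S_{2k+1} = S_{2k} − ψ_{k+1}/(y−m̂)`
bracket `δ`. -/
theorem stmt5 (s t mhat υ y : ℝ) (hst : s < t) (hv : mhat < υ) (hy : y ∈ Set.Ioc mhat υ)
    (ψ χ : ℕ → ℝ)
    (hψ : ∀ j : ℕ, ψ j = (2 * |υ - mhat| * j - (y - mhat)) *
      Real.exp (-2 * |υ - mhat| * j * (|υ - mhat| * j - (y - mhat)) / (t - s)))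
    (hχ : ∀ j : ℕ, χ j = (2 * |υ - mhat| * j + (y - mhat)) *
      Real.exp (-2 * |υ - mhat| * j * (|υ - mhat| * j + (y - mhat)) / (t - s)))
    (δ : ℝ) (hδ : HasSum (fun j : ℕ => (ψ (j + 1) - χ (j + 1)) / (y - mhat)) (1 - δ)) :
    (∀ j : ℕ, 1 ≤ j → 0 ≤ ψ j ∧ 0 ≤ χ j) ∧
    (∀ j : ℕ, Real.sqrt ((t - s) + |υ - mhat| ^ 2) / (2 * |υ - mhat|) ≤ (j : ℝ) →
      χ j ≤ ψ j ∧ ψ (j + 1) ≤ χ j) ∧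
    (∀ k : ℕ, Real.sqrt ((t - s) + |υ - mhat| ^ 2) / (2 * |υ - mhat|) ≤ (k : ℝ) →
      (1 - (∑ j ∈ Finset.range k, (ψ (j + 1) - χ (j + 1))) / (y - mhat)) - ψ (k + 1) / (y - mhat) ≤ δ ∧
      δ ≤ 1 - (∑ j ∈ Finset.range k, (ψ (j + 1) - χ (j + 1))) / (y - mhat)) :=
  stmt5_general s t mhat υ y hst hy ψ χ hψ hχ δ hδ
end

section
/- Fix s < t, m̂, υ > m̂, and y ∈ (m̂, υ]. With ψⱼ and χⱼ defined as in the Bessel bridge series, for every j ≥ √((t−s) + |υ−m̂|²)/(2|υ−m̂|) the ratio ψⱼ(y)/χⱼ(y) is minimised over y ∈ (m̂, υ] in the limit y → m̂, and at that minimising value the ratio exceeds 1. -/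
open Filter

/-- For `j ≥ √((t−s)+D²)/(2D)` with `D = |υ−m̂|`, the ratio `ψⱼ(y)/χⱼ(y)` (as a function of
`w = y − m̂ ∈ (0,D]`) is strictly increasing, so it is minimised in the limit `y → m̂` where it
tends to `1`, and it exceeds `1` for every `w ∈ (0,D]`. -/
theorem stmt6 (s t mhat υ : ℝ) (hst : s < t) (hv : mhat < υ)
    (j : ℕ) (hj : Real.sqrt ((t - s) + |υ - mhat| ^ 2) / (2 * |υ - mhat|) ≤ (j : ℝ))
    (r : ℝ → ℝ)
    (hr : ∀ w, r w =
      ((2 * |υ - mhat| * j - w) * Real.exp (-2 * |υ - mhat| * j * (|υ - mhat| * j - w) / (t - s))) /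
      ((2 * |υ - mhat| * j + w) * Real.exp (-2 * |υ - mhat| * j * (|υ - mhat| * j + w) / (t - s)))) :
    StrictMonoOn r (Set.Ioc 0 |υ - mhat|) ∧
    Tendsto r (nhdsWithin 0 (Set.Ioi 0)) (nhds 1) ∧
    ∀ w ∈ Set.Ioc (0:ℝ) |υ - mhat|, 1 < r w := by
  have hτ : 0 < t - s := sub_pos.mpr hst
  have hD : 0 < |υ - mhat| := abs_pos.mpr (sub_ne_zero.mpr hv.ne')
  set D := |υ - mhat| with hDdef
  set A : ℝ := D * (j : ℝ) with hAdef
  -- basic bounds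
  have hsqrt_pos : 0 < Real.sqrt ((t - s) + D ^ 2) := Real.sqrt_pos.mpr (by positivity)
  have hsq : Real.sqrt ((t - s) + D ^ 2) ≤ 2 * A := by
    have h := (div_le_iff₀ (by positivity : (0:ℝ) < 2 * D)).mp hj
    rw [hAdef]; nlinarith
  have h4 : (t - s) + D ^ 2 ≤ (2 * A) ^ 2 := by
    nlinarith [Real.sq_sqrt (show (0:ℝ) ≤ (t - s) + D ^ 2 by positivity)]
  have hA : 0 < A := by nlinarith
  have hDlt : D < 2 * A := by nlinarith
  -- rewrite r in simplified form
  have hr' : ∀ w, r w = (2 * A - w) / (2 * A + w) * Real.exp (4 * A * w / (t - s)) := by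
    intro w
    have hAe : 2 * A = 2 * D * (j : ℝ) := by rw [hAdef]; ring
    rw [hr w, mul_div_mul_comm, ← Real.exp_sub, hAe]
    congr 2
    rw [hAdef]
    field_simp
    ring
  have hrfun : r = fun w => (2 * A - w) / (2 * A + w) * Real.exp (4 * A * w / (t - s)) :=
    funext hr'
  set φ : ℝ → ℝ := fun w => (2 * A - w) / (2 * A + w) * Real.exp (4 * A * w / (t - s))
    with hφdef
  -- derivative
  have hd : ∀ x : ℝ, 2 * A + x ≠ 0 → HasDerivAt φ
      (((-1) * (2 * A + x) - (2 * A - x) * 1) / (2 * A + x) ^ 2 *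
        Real.exp (4 * A * x / (t - s)) +
       (2 * A - x) / (2 * A + x) *
        (Real.exp (4 * A * x / (t - s)) * (4 * A / (t - s)))) x := by
    intro x hden
    have h1 : HasDerivAt (fun w : ℝ => 2 * A - w) (-1) x := by
      simpa using (hasDerivAt_id x).const_sub (2 * A)
    have h2 : HasDerivAt (fun w : ℝ => 2 * A + w) 1 x := by
      simpa using (hasDerivAt_id x).const_add (2 * A)
    have h3 : HasDerivAt (fun w : ℝ => 4 * A * w / (t - s)) (4 * A / (t - s)) x := by
      simpa using ((hasDerivAt_id x).const_mul (4 * A)).div_const (t - s)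
    exact (h1.div h2 hden).mul h3.exp
  have hderiv_pos : ∀ x ∈ Set.Ioo (0:ℝ) D, 0 < deriv φ x := by
    intro x hx
    have hxpos : 0 < x := hx.1
    have hden0 : (0:ℝ) < 2 * A + x := by linarith
    have hden : 2 * A + x ≠ 0 := hden0.ne'
    have heq : deriv φ x =
        Real.exp (4 * A * x / (t - s)) * (4 * A) * ((2 * A) ^ 2 - x ^ 2 - (t - s)) /
          ((t - s) * (2 * A + x) ^ 2) := by
      rw [(hd x hden).deriv]
      field_simp
      ring
    rw [heq]
    apply div_pos
    · have hkey : 0 < (2 * A) ^ 2 - x ^ 2 - (t - s) := by nlinarith [hx.2]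
      have := Real.exp_pos (4 * A * x / (t - s))
      positivity
    · positivity
  have hcontOn : ContinuousOn φ (Set.Ioc 0 D) := by
    apply ContinuousOn.mul
    · apply ContinuousOn.div
      · fun_prop
      · fun_prop
      · intro x hx
        have : (0:ℝ) < 2 * A + x := by have := hx.1; linarith
        exact this.ne'
    · fun_prop
  have hmono : StrictMonoOn φ (Set.Ioc 0 D) := by
    apply strictMonoOn_of_deriv_pos (convex_Ioc 0 D) hcontOn
    intro x hx
    rw [interior_Ioc] at hx
    exact hderiv_pos x hx
  have hφ0 : φ 0 = 1 := by
    rw [hφdef]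
    simp only [mul_zero, zero_div, Real.exp_zero, sub_zero, add_zero, mul_one]
    exact div_self (by linarith)
  have hcont0 : ContinuousAt φ 0 := by
    apply ContinuousAt.mul
    · exact ContinuousAt.div (by fun_prop) (by fun_prop)
        (by simpa using (show (0:ℝ) < 2 * A + 0 by linarith).ne')
    · fun_prop
  have htend : Tendsto φ (nhdsWithin 0 (Set.Ioi 0)) (nhds 1) := by
    have := hcont0.tendsto.mono_left (nhdsWithin_le_nhds (s := Set.Ioi (0:ℝ)))
    rwa [hφ0] at this
  refine ⟨by rw [hrfun]; exact hmono, by rw [hrfun]; exact htend, ?_⟩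
  intro w hw
  rw [hrfun]
  have hw2 : w / 2 ∈ Set.Ioc (0:ℝ) D := ⟨by linarith [hw.1], by linarith [hw.2]⟩
  have hlt : φ (w / 2) < φ w := hmono hw2 hw (by linarith [hw.1])
  have hle : 1 ≤ φ (w / 2) := by
    apply le_of_tendsto htend
    filter_upwards [Ioo_mem_nhdsGT_of_mem (Set.mem_Ico.mpr ⟨le_refl (0:ℝ), hw2.1⟩)] with x hx
    exact (hmono ⟨hx.1, le_trans hx.2.le hw2.2⟩ hw2 hx.2).le
  exact lt_of_le_of_lt hle hlt
end

section
/- Let U_X ≥ L_X be reals, T > 0, and suppose φ : [0,T] → [L_X, U_X] is measurable. Let κ ~ Poisson((U_X − L_X)T) and, given κ, let ξ₁,…,ξ_κ be i.i.d. Uniform[0,T]. Then E[∏_{i=1}^{κ} (U_X − φ(ξᵢ))/(U_X − L_X)] = exp(−∫₀ᵀ (φ(s) − L_X) ds). -/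
/-!
With the weight `w = (U - φ) / (U - L) ∈ [0, 1]` on `[0, T]`, independence of `κ` from the
i.i.d. sequence `ξ` lets one condition on `κ = k`, where the estimator has mean `m ^ k` with
`m = T⁻¹ ∫₀ᵀ w`. Averaging `m ^ κ` against `Poisson(λ)`, `λ = (U - L) T`, gives the generating
function `exp (λ (m - 1))`, and `λ (m - 1) = ∫₀ᵀ (U - φ) - λ = -∫₀ᵀ (φ - L)`.
-/

open MeasureTheory ProbabilityTheory Real Finset
open scoped ENNReal NNReal

theorem MeasureTheory.ae_mem_of_map_eq_smul_restrict {Ω α : Type*} [MeasurableSpace Ω]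
    [MeasurableSpace α] {P : Measure Ω} {X : Ω → α} (hX : AEMeasurable X P) {c : ℝ≥0∞}
    {μ : Measure α} {s : Set α} (hs : MeasurableSet s) (h : P.map X = c • μ.restrict s) :
    ∀ᵐ ω ∂P, X ω ∈ s :=
  ae_of_ae_map hX (h ▸ Measure.ae_smul_measure (ae_restrict_mem hs) c)

theorem Measurable.integrableOn_of_mapsTo_Icc {α : Type*} [MeasurableSpace α] {μ : Measure α}
    {s : Set α} {f : α → ℝ} (hf : Measurable f) (hs : MeasurableSet s) (hμs : μ s ≠ ∞) {a b : ℝ}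
    (h : Set.MapsTo f s (Set.Icc a b)) : IntegrableOn f s μ :=
  Measure.integrableOn_of_bounded hμs hf.aestronglyMeasurable
    (ae_restrict_of_forall_mem hs fun _ hx ↦ abs_le_max_abs_abs (h hx).1 (h hx).2)

theorem measurable_prod_range {β M : Type*} [MeasurableSpace β] [CommMonoid M]
    [MeasurableSpace M] [MeasurableMul₂ M] {F : β → M} (hF : Measurable F) :
    Measurable fun p : ℕ × (ℕ → β) ↦ ∏ i ∈ range p.1, F (p.2 i) :=
  measurable_from_prod_countable_right fun k ↦
    Finset.measurable_fun_prod (range k) fun i _ ↦ hF.comp (measurable_pi_apply i)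

theorem MeasureTheory.lintegral_ofReal_comp_of_map_eq_smul_restrict {Ω α : Type*}
    [MeasurableSpace Ω] [MeasurableSpace α] {P : Measure Ω} {X : Ω → α} (hX : Measurable X)
    {a : ℝ} (ha : 0 ≤ a) {μ : Measure α} {s : Set α}
    (h : P.map X = ENNReal.ofReal a • μ.restrict s)
    {w : α → ℝ} (hw : Measurable w) (hw_int : IntegrableOn w s μ)
    (hw_nonneg : 0 ≤ᵐ[μ.restrict s] w) :
    ∫⁻ ω, ENNReal.ofReal (w (X ω)) ∂P = ENNReal.ofReal (a * ∫ x in s, w x ∂μ) := by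
  rw [← lintegral_map (f := fun x ↦ ENNReal.ofReal (w x)) hw.ennreal_ofReal hX, h,
    lintegral_smul_measure, ← ofReal_integral_eq_lintegral_ofReal hw_int hw_nonneg, smul_eq_mul,
    ← ENNReal.ofReal_mul ha]

theorem MeasureTheory.mul_setIntegral_sub_div_sub {α : Type*} [MeasurableSpace α]
    {μ : Measure α} {s : Set α} (hs : MeasurableSet s) (hμs : μ s ≠ ∞) {L U : ℝ} {φ : α → ℝ}
    (hφ_int : IntegrableOn φ s μ) (hφ : Set.MapsTo φ s (Set.Icc L U)) :
    (U - L) * ∫ x in s, (U - φ x) / (U - L) ∂μ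
      = (U - L) * μ.real s - ∫ x in s, (φ x - L) ∂μ := by
  have hconst (a : ℝ) : IntegrableOn (fun _ ↦ a) s μ := integrableOn_const hμs
  have hφL_int : IntegrableOn (fun x ↦ φ x - L) s μ := hφ_int.sub (hconst L)
  have hweight : ∀ x ∈ s, (U - L) * ((U - φ x) / (U - L)) = (U - L) - (φ x - L) := fun x hx ↦ by
    -- if `U = L` the division gives the junk value `0`, but then `φ x = U` as well
    rcases (hφ hx).1.trans (hφ hx).2 |>.eq_or_lt with h | h
    · simp [h, le_antisymm (hφ hx).2 (h ▸ (hφ hx).1)]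
    · rw [mul_div_cancel₀ _ (sub_pos.2 h).ne']
      ring
  rw [← integral_const_mul, setIntegral_congr_fun hs hweight, integral_sub (hconst _) hφL_int,
    setIntegral_const, smul_eq_mul, mul_comm]

namespace ProbabilityTheory

variable {Ω α β : Type*} [MeasurableSpace Ω] [MeasurableSpace α] [MeasurableSpace β]
  {P : Measure Ω}

theorem IndepFun.lintegral_comp_eq_lintegral_map [IsFiniteMeasure P] {X : Ω → α} {Y : Ω → β}
    (hXY : IndepFun X Y P) (hX : AEMeasurable X P) (hY : AEMeasurable Y P)
    {g : α × β → ℝ≥0∞} (hg : Measurable g) :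
    ∫⁻ ω, g (X ω, Y ω) ∂P = ∫⁻ x, ∫⁻ ω, g (x, Y ω) ∂P ∂(P.map X) := by
  calc ∫⁻ ω, g (X ω, Y ω) ∂P
      = ∫⁻ p, g p ∂(P.map fun ω ↦ (X ω, Y ω)) :=
        (lintegral_map' hg.aemeasurable (hX.prodMk hY)).symm
    _ = ∫⁻ p, g p ∂((P.map X).prod (P.map Y)) := by
        rw [(indepFun_iff_map_prod_eq_prod_map_map hX hY).1 hXY]
    _ = ∫⁻ x, ∫⁻ y, g (x, y) ∂(P.map Y) ∂(P.map X) := lintegral_prod _ hg.aemeasurable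
    _ = ∫⁻ x, ∫⁻ ω, g (x, Y ω) ∂P ∂(P.map X) := by
        congr with x
        exact lintegral_map' (hg.comp measurable_prodMk_left).aemeasurable hY

section Poisson

open scoped Nat

theorem integrable_pow_poissonMeasure (r : ℝ≥0) (c : ℝ) :
    Integrable (fun n : ℕ ↦ c ^ n) Po(r) := by
  refine integrable_poissonMeasure_iff.2 <|
    ((summable_pow_div_factorial (r * |c|)).mul_left (exp (-r))).congr fun n ↦ ?_
  rw [norm_pow, Real.norm_eq_abs, mul_pow]
  ring

theorem integral_pow_poissonMeasure (r : ℝ≥0) (c : ℝ) :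
    ∫ n, c ^ n ∂Po(r) = exp (r * (c - 1)) := by
  rw [integral_poissonMeasure]
  calc ∑' n : ℕ, (exp (-r) * r ^ n / n !) • c ^ n
      = ∑' n : ℕ, exp (-r) * ((r * c) ^ n / n !) := by
        congr with n
        rw [smul_eq_mul, mul_pow]
        ring
    _ = exp (-r) * exp (r * c) := by
        rw [tsum_mul_left, exp_eq_exp_ℝ, NormedSpace.exp_eq_tsum_div]
    _ = exp (r * (c - 1)) := by rw [← exp_add]; ring_nf

theorem lintegral_ofReal_pow_poissonMeasure (r : ℝ≥0) {c : ℝ} (hc : 0 ≤ c) :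
    ∫⁻ n, ENNReal.ofReal c ^ n ∂Po(r) = ENNReal.ofReal (exp (r * (c - 1))) := by
  simp_rw [← ENNReal.ofReal_pow hc]
  rw [← ofReal_integral_eq_lintegral_ofReal (integrable_pow_poissonMeasure r c)
    (Filter.Eventually.of_forall fun n ↦ pow_nonneg hc n), integral_pow_poissonMeasure]

theorem hasLaw_poissonMeasure {κ : Ω → ℕ} (hκ : Measurable κ) {r : ℝ≥0}
    (h : ∀ k, P {ω | κ ω = k} = ENNReal.ofReal (exp (-r) * r ^ k / k !)) :
    HasLaw κ Po(r) P where
  aemeasurable := hκ.aemeasurable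
  map_eq := Measure.ext_of_singleton fun k ↦ by
    rw [Measure.map_apply hκ (measurableSet_singleton k), poissonMeasure_singleton]
    exact h k

end Poisson

theorem lintegral_prod_range_poisson [IsFiniteMeasure P] {κ : Ω → ℕ} {ξ : ℕ → Ω → β}
    {r : ℝ≥0} (hκ : HasLaw κ Po(r) P) (hξ : ∀ i, Measurable (ξ i)) (hiid : iIndepFun ξ P)
    (hindep : IndepFun κ (fun ω i ↦ ξ i ω) P) {F : β → ℝ≥0∞} (hF : Measurable F) {c : ℝ}
    (hc : 0 ≤ c) (hmean : ∀ i, ∫⁻ ω, F (ξ i ω) ∂P = ENNReal.ofReal c) :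
    ∫⁻ ω, ∏ i ∈ range (κ ω), F (ξ i ω) ∂P = ENNReal.ofReal (exp (r * (c - 1))) := by
  have hprod (k : ℕ) : ∫⁻ ω, ∏ i ∈ range k, F (ξ i ω) ∂P = ENNReal.ofReal c ^ k :=
    (lintegral_prod_eq_prod_lintegral_of_indepFun _ (fun i ↦ F ∘ ξ i)
      (hiid.comp (fun _ ↦ F) fun _ ↦ hF) fun i ↦ hF.comp (hξ i)).trans (by simp [hmean])
  rw [hindep.lintegral_comp_eq_lintegral_map (g := fun p ↦ ∏ i ∈ range p.1, F (p.2 i))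
    hκ.aemeasurable (measurable_pi_lambda _ hξ).aemeasurable (measurable_prod_range hF),
    hκ.map_eq]
  simp_rw [hprod]
  exact lintegral_ofReal_pow_poissonMeasure r hc

theorem integral_prod_range_poisson [IsFiniteMeasure P] {κ : Ω → ℕ} {ξ : ℕ → Ω → β}
    {r : ℝ≥0} (hκ : HasLaw κ Po(r) P) (hκm : Measurable κ) (hξ : ∀ i, Measurable (ξ i))
    (hiid : iIndepFun ξ P) (hindep : IndepFun κ (fun ω i ↦ ξ i ω) P) {w : β → ℝ}
    (hw : Measurable w) (hw_nonneg : ∀ᵐ ω ∂P, ∀ i, 0 ≤ w (ξ i ω)) {c : ℝ} (hc : 0 ≤ c)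
    (hmean : ∀ i, ∫⁻ ω, ENNReal.ofReal (w (ξ i ω)) ∂P = ENNReal.ofReal c) :
    ∫ ω, ∏ i ∈ range (κ ω), w (ξ i ω) ∂P = exp (r * (c - 1)) := by
  have hmeas : Measurable fun ω ↦ ∏ i ∈ range (κ ω), w (ξ i ω) :=
    (measurable_prod_range hw).comp (hκm.prodMk (measurable_pi_lambda _ hξ))
  rw [integral_eq_lintegral_of_nonneg_ae
      (hw_nonneg.mono fun ω hω ↦ prod_nonneg fun i _ ↦ hω i) hmeas.aestronglyMeasurable,
    lintegral_congr_ae (hw_nonneg.mono fun ω hω ↦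
      ENNReal.ofReal_prod_of_nonneg fun i _ ↦ hω i),
    lintegral_prod_range_poisson hκ hξ hiid hindep hw.ennreal_ofReal hc hmean,
    ENNReal.toReal_ofReal (exp_nonneg _)]

end ProbabilityTheory

/-- The Poisson estimator identity: if `κ ~ Poisson((U−L)T)` and, independently of `κ`,
`ξ₁, ξ₂, …` are i.i.d. `Uniform[0,T]`, and `φ : [0,T] → [L,U]` is measurable, then
`E[∏_{i=1}^{κ} (U − φ(ξᵢ))/(U − L)] = exp(−∫₀ᵀ (φ(s) − L) ds)` (the empty product being `1`). -/
theorem stmt15 {Ω : Type*} [MeasurableSpace Ω] (P : Measure Ω) [IsProbabilityMeasure P]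
    (L U T : ℝ) (hLU : L ≤ U) (hT : 0 < T)
    (φ : ℝ → ℝ) (hφmeas : Measurable φ)
    (hφ : ∀ s ∈ Set.Icc (0:ℝ) T, φ s ∈ Set.Icc L U)
    (κ : Ω → ℕ) (ξ : ℕ → Ω → ℝ)
    (hκmeas : Measurable κ) (hξmeas : ∀ i, Measurable (ξ i))
    (hκ : ∀ k : ℕ, P {ω | κ ω = k}
      = ENNReal.ofReal (Real.exp (-(U - L) * T) * ((U - L) * T) ^ k / k.factorial))
    (hξ : ∀ i, Measure.map (ξ i) P = ENNReal.ofReal T⁻¹ • volume.restrict (Set.Icc 0 T))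
    (hξiid : iIndepFun ξ P)
    (hindep : IndepFun κ (fun ω (i : ℕ) => ξ i ω) P) :
    ∫ ω, ∏ i ∈ Finset.range (κ ω), (U - φ (ξ i ω)) / (U - L) ∂P
      = Real.exp (-(∫ s in Set.Icc (0:ℝ) T, (φ s - L))) := by
  have hφ_int : IntegrableOn φ (Set.Icc 0 T) :=
    hφmeas.integrableOn_of_mapsTo_Icc measurableSet_Icc measure_Icc_lt_top.ne hφ
  have hw_int : IntegrableOn (fun x ↦ (U - φ x) / (U - L)) (Set.Icc 0 T) :=
    ((integrableOn_const measure_Icc_lt_top.ne).sub hφ_int).div_const _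
  have hw_nonneg : ∀ x ∈ Set.Icc 0 T, 0 ≤ (U - φ x) / (U - L) := fun x hx ↦
    div_nonneg (sub_nonneg.2 (hφ x hx).2) (sub_nonneg.2 hLU)
  have hξ_mem : ∀ᵐ ω ∂P, ∀ i, ξ i ω ∈ Set.Icc 0 T := ae_all_iff.2 fun i ↦
    ae_mem_of_map_eq_smul_restrict (hξmeas i).aemeasurable measurableSet_Icc (hξ i)
  have hr : (((U - L) * T).toNNReal : ℝ) = (U - L) * T :=
    Real.coe_toNNReal _ (mul_nonneg (sub_nonneg.2 hLU) hT.le)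
  rw [integral_prod_range_poisson (hasLaw_poissonMeasure hκmeas fun k ↦ by rw [hκ k, hr, neg_mul])
    hκmeas hξmeas hξiid hindep (by fun_prop) (hξ_mem.mono fun ω hω i ↦ hw_nonneg _ (hω i))
    (mul_nonneg (inv_nonneg.2 hT.le) (setIntegral_nonneg measurableSet_Icc hw_nonneg))
    fun i ↦ lintegral_ofReal_comp_of_map_eq_smul_restrict (hξmeas i) (inv_nonneg.2 hT.le) (hξ i)
      (by fun_prop) hw_int (ae_restrict_of_forall_mem measurableSet_Icc hw_nonneg), hr]
  have hgap := mul_setIntegral_sub_div_sub measurableSet_Icc measure_Icc_lt_top.ne hφ_int hφ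
  rw [volume_real_Icc_of_le hT.le, sub_zero] at hgap
  congr 1
  linear_combination hgap +
    (U - L) * (∫ s in Set.Icc 0 T, (U - φ s) / (U - L)) * mul_inv_cancel₀ hT.ne'
end
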